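/- For every positive integer m, the 2-edge-colored graph H_m^+ (defined like H_m but with |X0| = m+1) satisfies |E| + min{|E1|,|E2|} = C(3m+1, 2) and contains no non-monochromatic triangle. -/
import Mathlib

open scoped Classical
open Finset SimpleGraph

lemma card_filter_sum' {α β : Type*} [Fintype α] [Fintype β] (p : α ⊕ β → Prop)
    [DecidablePred p] :
    (univ.filter p).card = (univ.filter (fun a => p (Sum.inl a))).card
      + (univ.filter (fun b => p (Sum.inr b))).card := by
  rw [← Fintype.card_subtype, ← Fintype.card_subtype, ← Fintype.card_subtype,
    Fintype.card_congr (Equiv.subtypeSum (p := p)), Fintype.card_sum]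

/-- `HGraph a m`: vertex set `X0 ⊔ X1 ⊔ X2` with `|X0| = a`, `|X1| = |X2| = m`;
all edges between `X0` and `X1 ∪ X2`, plus cliques on `X1` and `X2`.
`HGraph (m+1) m` is the graph `H_m^+`. -/
def HGraph (a m : ℕ) : SimpleGraph (Fin a ⊕ (Fin m ⊕ Fin m)) :=
  SimpleGraph.fromRel (fun x y =>
    match x, y with
    | Sum.inl _, Sum.inr _ => True
    | Sum.inr _, Sum.inl _ => True
    | Sum.inr (Sum.inl _), Sum.inr (Sum.inl _) => True
    | Sum.inr (Sum.inr _), Sum.inr (Sum.inr _) => True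
    | _, _ => False)

def inX1 {a m : ℕ} (v : Fin a ⊕ (Fin m ⊕ Fin m)) : Prop :=
  ∃ i : Fin m, v = Sum.inr (Sum.inl i)

def inX2 {a m : ℕ} (v : Fin a ⊕ (Fin m ⊕ Fin m)) : Prop :=
  ∃ i : Fin m, v = Sum.inr (Sum.inr i)

/-- The graph of edges of `H_m^+` incident with `X1`. -/
def GX1 (m : ℕ) : SimpleGraph (Fin (m + 1) ⊕ (Fin m ⊕ Fin m)) :=
  SimpleGraph.fromRel (fun x y =>
    match x, y with
    | Sum.inl _, Sum.inr (Sum.inl _) => True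
    | Sum.inr (Sum.inl _), Sum.inl _ => True
    | Sum.inr (Sum.inl _), Sum.inr (Sum.inl _) => True
    | _, _ => False)

/-- The graph of edges of `H_m^+` incident with `X2`. -/
def GX2 (m : ℕ) : SimpleGraph (Fin (m + 1) ⊕ (Fin m ⊕ Fin m)) :=
  SimpleGraph.fromRel (fun x y =>
    match x, y with
    | Sum.inl _, Sum.inr (Sum.inr _) => True
    | Sum.inr (Sum.inr _), Sum.inl _ => True
    | Sum.inr (Sum.inr _), Sum.inr (Sum.inr _) => True
    | _, _ => False)

lemma HGraph_degree (m : ℕ) (hm : 0 < m) (v : Fin (m + 1) ⊕ (Fin m ⊕ Fin m)) :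
    (HGraph (m + 1) m).degree v = 2 * m := by
  rw [← card_neighborFinset_eq_degree, neighborFinset_eq_filter, card_filter_sum']
  conv_lhs => rw [card_filter_sum']
  rcases v with a | (i | i) <;>
    simp [HGraph, SimpleGraph.fromRel_adj, Finset.filter_ne, Finset.filter_ne',
      Finset.card_erase_of_mem] <;> omega

lemma GX1_degree_inl (m : ℕ) (a : Fin (m + 1)) :
    (GX1 m).degree (Sum.inl a) = m := by
  rw [← card_neighborFinset_eq_degree, neighborFinset_eq_filter, card_filter_sum']
  conv_lhs => rw [card_filter_sum']
  simp [GX1, SimpleGraph.fromRel_adj]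

lemma GX1_degree_inl' (m : ℕ) (hm : 0 < m) (i : Fin m) :
    (GX1 m).degree (Sum.inr (Sum.inl i)) = 2 * m := by
  rw [← card_neighborFinset_eq_degree, neighborFinset_eq_filter, card_filter_sum']
  conv_lhs => rw [card_filter_sum']
  simp [GX1, SimpleGraph.fromRel_adj, Finset.filter_ne, Finset.filter_ne',
    Finset.card_erase_of_mem]
  omega

lemma GX1_degree_inr' (m : ℕ) (i : Fin m) :
    (GX1 m).degree (Sum.inr (Sum.inr i)) = 0 := by
  rw [← card_neighborFinset_eq_degree, neighborFinset_eq_filter, card_filter_sum']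
  conv_lhs => rw [card_filter_sum']
  simp [GX1, SimpleGraph.fromRel_adj]

lemma GX2_degree_inl (m : ℕ) (a : Fin (m + 1)) :
    (GX2 m).degree (Sum.inl a) = m := by
  rw [← card_neighborFinset_eq_degree, neighborFinset_eq_filter, card_filter_sum']
  conv_lhs => rw [card_filter_sum']
  simp [GX2, SimpleGraph.fromRel_adj]

lemma GX2_degree_inr' (m : ℕ) (hm : 0 < m) (i : Fin m) :
    (GX2 m).degree (Sum.inr (Sum.inr i)) = 2 * m := by
  rw [← card_neighborFinset_eq_degree, neighborFinset_eq_filter, card_filter_sum']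
  conv_lhs => rw [card_filter_sum']
  simp [GX2, SimpleGraph.fromRel_adj, Finset.filter_ne, Finset.filter_ne',
    Finset.card_erase_of_mem]
  omega

lemma GX2_degree_inl' (m : ℕ) (i : Fin m) :
    (GX2 m).degree (Sum.inr (Sum.inl i)) = 0 := by
  rw [← card_neighborFinset_eq_degree, neighborFinset_eq_filter, card_filter_sum']
  conv_lhs => rw [card_filter_sum']
  simp [GX2, SimpleGraph.fromRel_adj]

lemma filter_eq_edgeFinset (m : ℕ) :
    univ.filter (fun e : Sym2 (Fin (m + 1) ⊕ (Fin m ⊕ Fin m)) =>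
      e ∈ (HGraph (m + 1) m).edgeSet) = (HGraph (m + 1) m).edgeFinset := by
  ext e; simp

lemma filter_eq_GX1 (m : ℕ) :
    univ.filter (fun e : Sym2 (Fin (m + 1) ⊕ (Fin m ⊕ Fin m)) =>
      e ∈ (HGraph (m + 1) m).edgeSet ∧ ∃ v ∈ e, inX1 v) = (GX1 m).edgeFinset := by
  ext e
  induction e using Sym2.ind with
  | _ x y =>
    simp only [Finset.mem_filter, Finset.mem_univ, true_and, mem_edgeFinset,
      SimpleGraph.mem_edgeSet, Sym2.mem_iff]
    rcases x with a | (i | i) <;> rcases y with b | (j | j) <;>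
      simp [HGraph, GX1, SimpleGraph.fromRel_adj, inX1]

lemma filter_eq_GX2 (m : ℕ) :
    univ.filter (fun e : Sym2 (Fin (m + 1) ⊕ (Fin m ⊕ Fin m)) =>
      e ∈ (HGraph (m + 1) m).edgeSet ∧ ∃ v ∈ e, inX2 v) = (GX2 m).edgeFinset := by
  ext e
  induction e using Sym2.ind with
  | _ x y =>
    simp only [Finset.mem_filter, Finset.mem_univ, true_and, mem_edgeFinset,
      SimpleGraph.mem_edgeSet, Sym2.mem_iff]
    rcases x with a | (i | i) <;> rcases y with b | (j | j) <;>
      simp [HGraph, GX2, SimpleGraph.fromRel_adj, inX2]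

open scoped Classical in
/-- `H_m^+` satisfies `|E| + min{|E1|, |E2|} = C(3m+1, 2)` and has no
non-monochromatic triangle. -/
theorem HmPlus_properties (m : ℕ) (hm : 0 < m) :
    (Finset.univ.filter (fun e : Sym2 (Fin (m + 1) ⊕ (Fin m ⊕ Fin m)) =>
        e ∈ (HGraph (m + 1) m).edgeSet)).card +
      min (Finset.univ.filter (fun e : Sym2 (Fin (m + 1) ⊕ (Fin m ⊕ Fin m)) =>
            e ∈ (HGraph (m + 1) m).edgeSet ∧ ∃ v ∈ e, inX1 v)).card
          (Finset.univ.filter (fun e : Sym2 (Fin (m + 1) ⊕ (Fin m ⊕ Fin m)) =>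
            e ∈ (HGraph (m + 1) m).edgeSet ∧ ∃ v ∈ e, inX2 v)).card
      = Nat.choose (3 * m + 1) 2 ∧
    ¬ ∃ x y z : Fin (m + 1) ⊕ (Fin m ⊕ Fin m),
      (HGraph (m + 1) m).Adj x y ∧ (HGraph (m + 1) m).Adj y z ∧ (HGraph (m + 1) m).Adj x z ∧
      ((∃ v ∈ s(x, y), inX1 v) ∨ (∃ v ∈ s(y, z), inX1 v) ∨ (∃ v ∈ s(x, z), inX1 v)) ∧
      ((∃ v ∈ s(x, y), inX2 v) ∨ (∃ v ∈ s(y, z), inX2 v) ∨ (∃ v ∈ s(x, z), inX2 v)) := by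
  constructor
  · rw [filter_eq_edgeFinset, filter_eq_GX1, filter_eq_GX2]
    have hE : 2 * (HGraph (m + 1) m).edgeFinset.card = 2 * (m * (3 * m + 1)) := by
      rw [← SimpleGraph.sum_degrees_eq_twice_card_edges]
      simp only [HGraph_degree m hm]
      rw [Finset.sum_const, Finset.card_univ]
      simp [Fintype.card_sum]; ring
    have hE1 : 2 * (GX1 m).edgeFinset.card = m * (3 * m + 1) := by
      rw [← SimpleGraph.sum_degrees_eq_twice_card_edges, Fintype.sum_sum_type,
        Fintype.sum_sum_type]
      simp only [GX1_degree_inl, GX1_degree_inl' m hm, GX1_degree_inr']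
      simp [Finset.sum_const, Finset.card_univ]; ring
    have hE2 : 2 * (GX2 m).edgeFinset.card = m * (3 * m + 1) := by
      rw [← SimpleGraph.sum_degrees_eq_twice_card_edges, Fintype.sum_sum_type,
        Fintype.sum_sum_type]
      simp only [GX2_degree_inl, GX2_degree_inr' m hm, GX2_degree_inl']
      simp [Finset.sum_const, Finset.card_univ]; ring
    have hN : 2 * Nat.choose (3 * m + 1) 2 = 3 * m * (3 * m + 1) := by
      rw [Nat.choose_two_right, Nat.add_sub_cancel, mul_comm (3 * m + 1) (3 * m),
        Nat.mul_div_cancel' (Nat.even_mul_succ_self (3 * m)).two_dvd]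
    have key : 3 * m * (3 * m + 1) = 3 * (m * (3 * m + 1)) := by ring
    omega
  · rintro ⟨x, y, z, hxy, hyz, hxz, h1, h2⟩
    have hx1 : ∃ i : Fin m, (Sum.inr (Sum.inl i) : Fin (m + 1) ⊕ (Fin m ⊕ Fin m)) = x ∨
        Sum.inr (Sum.inl i) = y ∨ Sum.inr (Sum.inl i) = z := by
      rcases h1 with h | h | h <;> obtain ⟨v, hv, i, rfl⟩ := h <;>
        rw [Sym2.mem_iff] at hv <;> exact ⟨i, by tauto⟩
    have hx2 : ∃ j : Fin m, (Sum.inr (Sum.inr j) : Fin (m + 1) ⊕ (Fin m ⊕ Fin m)) = x ∨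
        Sum.inr (Sum.inr j) = y ∨ Sum.inr (Sum.inr j) = z := by
      rcases h2 with h | h | h <;> obtain ⟨v, hv, j, rfl⟩ := h <;>
        rw [Sym2.mem_iff] at hv <;> exact ⟨j, by tauto⟩
    obtain ⟨i, hi⟩ := hx1
    obtain ⟨j, hj⟩ := hx2
    rcases hi with rfl | rfl | rfl <;> rcases hj with hj | hj | hj <;>
      first
        | exact absurd hj (by simp)
        | (subst hj
           simp [HGraph, SimpleGraph.fromRel_adj] at hxy hyz hxz)
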